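/- arXiv:2501.00470 — 7 statements merged into one kernel-verified Lean document; each statement's English description precedes it below -/
import Mathlib

section
/- Let e_1,...,e_r be integers with e_i ≥ 2, and let (λ_i), (μ_i) be the associated sequences (μ_0 = 0, μ_1 = 1, μ_{i+1} = e_i μ_i − μ_{i−1}; λ_{r+1} = 0, λ_r = 1, λ_{i−1} = e_i λ_i − λ_{i+1}), and n = λ_0 = μ_{r+1}. Then for all 0 ≤ i < j ≤ r+1, the quantity λ_i μ_j − λ_j μ_i is a positive multiple of n. -/
/-- For the Hirzebruch–Jung sequences λ, μ with n = λ_0 = μ_{r+1}, the quantity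
λ_i μ_j − λ_j μ_i is a positive multiple of n for all 0 ≤ i < j ≤ r+1. -/
theorem stmt2 (r : ℕ) (e lam mu : ℕ → ℤ)
    (he : ∀ i, 1 ≤ i → i ≤ r → 2 ≤ e i)
    (hmu0 : mu 0 = 0) (hmu1 : mu 1 = 1)
    (hmu : ∀ i, 1 ≤ i → i ≤ r → mu (i + 1) = e i * mu i - mu (i - 1))
    (hlamtop : lam (r + 1) = 0) (hlamr : lam r = 1)
    (hlam : ∀ i, 1 ≤ i → i ≤ r → lam (i - 1) = e i * lam i - lam (i + 1))
    (hn : lam 0 = mu (r + 1)) :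
    ∀ i j, i < j → j ≤ r + 1 →
      ∃ c : ℤ, 0 < c ∧ lam i * mu j - lam j * mu i = c * mu (r + 1) := by
  -- Wronskian is constant, equal to n = mu (r+1)
  have wron : ∀ k, k ≤ r → lam k * mu (k + 1) - lam (k + 1) * mu k = mu (r + 1) := by
    intro k
    induction k with
    | zero => intro _; simp [hmu0, hmu1, hn]
    | succ k ih =>
      intro hk
      have hk' : k ≤ r := Nat.le_of_succ_le hk
      have h1 : mu (k + 1 + 1) = e (k + 1) * mu (k + 1) - mu k := by
        have := hmu (k + 1) (Nat.le_add_left 1 k) hk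
        simpa using this
      have h2 : lam (k + 1 + 1) = e (k + 1) * lam (k + 1) - lam k := by
        have := hlam (k + 1) (Nat.le_add_left 1 k) hk
        simp at this
        linarith
      rw [h1, h2]
      have := ih hk'
      ring_nf
      ring_nf at this
      linarith
  -- pairs lemma
  have pair : ∀ i k, i ≤ k → k ≤ r → ∃ c d : ℤ, 0 ≤ c ∧ c < d ∧
      lam i * mu k - lam k * mu i = c * mu (r + 1) ∧
      lam i * mu (k + 1) - lam (k + 1) * mu i = d * mu (r + 1) := by
    intro i k hik
    induction k, hik using Nat.le_induction with
    | base =>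
      intro hir
      exact ⟨0, 1, le_refl 0, one_pos, by ring, by simpa using wron i hir⟩
    | succ k hik ih =>
      intro hk
      obtain ⟨c, d, hc, hcd, hDk, hDk1⟩ := ih (Nat.le_of_succ_le hk)
      refine ⟨d, e (k + 1) * d - c, by linarith, ?_, hDk1, ?_⟩
      · have he' := he (k + 1) (Nat.le_add_left 1 k) hk
        nlinarith
      · have h1 : mu (k + 1 + 1) = e (k + 1) * mu (k + 1) - mu k := by
          have := hmu (k + 1) (Nat.le_add_left 1 k) hk
          simpa using this
        have h2 : lam (k + 1 + 1) = e (k + 1) * lam (k + 1) - lam k := by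
          have := hlam (k + 1) (Nat.le_add_left 1 k) hk
          simp at this
          linarith
        rw [h1, h2]
        linear_combination e (k + 1) * hDk1 - hDk
  intro i j hij hj
  obtain ⟨k, rfl⟩ : ∃ k, j = k + 1 := ⟨j - 1, (Nat.succ_pred_eq_of_pos (Nat.lt_of_le_of_lt (Nat.zero_le i) hij)).symm⟩
  obtain ⟨c, d, hc, hcd, _, hD⟩ := pair i k (Nat.lt_succ_iff.mp hij) (Nat.succ_le_succ_iff.mp hj)
  exact ⟨d, lt_of_le_of_lt hc hcd, hD⟩
end

section
/- Let M = (m_{ij}) be a symmetric negative definite real r×r matrix with m_{ij} ≥ 0 for all i ≠ j. If x ∈ ℝ^r satisfies (Mx)_i ≤ 0 for every i, then x_i ≥ 0 for every i. -/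
/-!
Split `x = x⁺ - x⁻`. Since `x⁻` and `x⁺` have disjoint supports, only off-diagonal entries of `M`
enter `x⁻ ⬝ᵥ M *ᵥ x⁺`, so it is nonnegative; and `x⁻ ⬝ᵥ M *ᵥ x ≤ 0` because `x⁻ ≥ 0` and
`M *ᵥ x ≤ 0`. Hence `x⁻ ⬝ᵥ M *ᵥ x⁻ = x⁻ ⬝ᵥ M *ᵥ x⁺ - x⁻ ⬝ᵥ M *ᵥ x ≥ 0`, which negative
definiteness allows only for `x⁻ = 0`.
-/

open Matrix

variable {ι R : Type*} [Fintype ι] [CommRing R] [LinearOrder R] [IsStrictOrderedRing R]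

lemma negPart_mul_posPart (a : R) : a⁻ * a⁺ = 0 := by
  rcases le_total a 0 with ha | ha
  · rw [posPart_eq_zero.mpr ha, mul_zero]
  · rw [negPart_eq_zero.mpr ha, zero_mul]

lemma dotProduct_mulVec_nonneg_of_disjoint {M : Matrix ι ι R} (hoff : ∀ i j, i ≠ j → 0 ≤ M i j)
    {u v : ι → R} (hu : 0 ≤ u) (hv : 0 ≤ v) (huv : ∀ i, u i * v i = 0) :
    0 ≤ u ⬝ᵥ M *ᵥ v := by
  refine Finset.sum_nonneg fun i _ => ?_
  rw [mulVec, dotProduct, Finset.mul_sum]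
  refine Finset.sum_nonneg fun j _ => ?_
  rcases eq_or_ne i j with rfl | hij
  · rw [mul_left_comm, huv i, mul_zero]
  · exact mul_nonneg (hu i) (mul_nonneg (hoff i j hij) (hv j))

lemma negPart_dotProduct_mulVec_negPart_nonneg {M : Matrix ι ι R}
    (hoff : ∀ i j, i ≠ j → 0 ≤ M i j) {x : ι → R} (hx : M *ᵥ x ≤ 0) :
    0 ≤ x⁻ ⬝ᵥ M *ᵥ x⁻ := by
  have hpos : 0 ≤ x⁻ ⬝ᵥ M *ᵥ x⁺ :=
    dotProduct_mulVec_nonneg_of_disjoint hoff (negPart_nonneg x) (posPart_nonneg x)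
      fun i => by simpa only [Pi.negPart_apply, Pi.posPart_apply] using negPart_mul_posPart (x i)
  have hnonpos : x⁻ ⬝ᵥ M *ᵥ x ≤ 0 := by
    simpa only [neg_nonneg, dotProduct_neg, mulVec_neg] using
      dotProduct_nonneg_of_nonneg (negPart_nonneg x) (neg_nonneg.mpr hx)
  have hsplit : x⁻ ⬝ᵥ M *ᵥ x = x⁻ ⬝ᵥ M *ᵥ x⁺ - x⁻ ⬝ᵥ M *ᵥ x⁻ := by
    rw [← dotProduct_sub, ← mulVec_sub, posPart_sub_negPart]
  linarith

lemma nonneg_of_mulVec_nonpos {M : Matrix ι ι R}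
    (hneg : ∀ v : ι → R, v ≠ 0 → v ⬝ᵥ M *ᵥ v < 0) (hoff : ∀ i j, i ≠ j → 0 ≤ M i j)
    {x : ι → R} (hx : M *ᵥ x ≤ 0) : 0 ≤ x := by
  rw [← negPart_eq_zero]
  by_contra hne
  exact (hneg _ hne).not_ge (negPart_dotProduct_mulVec_negPart_nonneg hoff hx)

theorem stmt5_general (r : ℕ) (M : Matrix (Fin r) (Fin r) ℝ)
    (hneg : ∀ v : Fin r → ℝ, v ≠ 0 → dotProduct v (M.mulVec v) < 0)
    (hoff : ∀ i j, i ≠ j → 0 ≤ M i j)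
    (x : Fin r → ℝ) (hx : ∀ i, M.mulVec x i ≤ 0) :
    ∀ i, 0 ≤ x i :=
  nonneg_of_mulVec_nonpos hneg hoff hx

/-- If M is a symmetric negative definite real matrix with nonnegative off-diagonal
entries, and (Mx)_i ≤ 0 for every i, then x_i ≥ 0 for every i. -/
theorem stmt5 (r : ℕ) (M : Matrix (Fin r) (Fin r) ℝ)
    (hsym : M.IsSymm)
    (hneg : ∀ v : Fin r → ℝ, v ≠ 0 → dotProduct v (M.mulVec v) < 0)
    (hoff : ∀ i j, i ≠ j → 0 ≤ M i j)
    (x : Fin r → ℝ) (hx : ∀ i, M.mulVec x i ≤ 0) :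
    ∀ i, 0 ≤ x i :=
  stmt5_general r M hneg hoff x hx
end

section
/- Let q be a real quadratic form on a finite-dimensional real vector space with associated symmetric bilinear form B, and suppose q has at most one positive eigenvalue. Let D₁, D₂ be vectors such that q(λD₁ + μD₂) > 0 for some reals λ, μ. Then q(D₁)·q(D₂) ≤ B(D₁,D₂)², with equality if and only if some nonzero real linear combination of D₁ and D₂ lies in the kernel of B restricted to span(D₁,D₂) (i.e., is B-orthogonal to both D₁ and D₂). -/
/-- Hodge index theorem, linear algebra form: let B be a symmetric bilinear form on a
finite-dimensional real vector space such that every 2-dimensional span contains a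
nonzero vector of nonpositive square (index of positivity at most 1). If some linear
combination of D₁, D₂ has positive square, then B(D₁,D₁)·B(D₂,D₂) ≤ B(D₁,D₂)², with
equality iff some nontrivial linear combination of D₁ and D₂ is B-orthogonal to both. -/
theorem stmt7 (V : Type*) [AddCommGroup V] [Module ℝ V] [FiniteDimensional ℝ V]
    (B : LinearMap.BilinForm ℝ V)
    (hsymm : ∀ u v : V, B u v = B v u)
    (hindex : ∀ u v : V, LinearIndependent ℝ ![u, v] →
      ∃ w ∈ Submodule.span ℝ ({u, v} : Set V), w ≠ 0 ∧ B w w ≤ 0)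
    (D₁ D₂ : V)
    (hpos : ∃ l m : ℝ, 0 < B (l • D₁ + m • D₂) (l • D₁ + m • D₂)) :
    B D₁ D₁ * B D₂ D₂ ≤ (B D₁ D₂) ^ 2 ∧
    (B D₁ D₁ * B D₂ D₂ = (B D₁ D₂) ^ 2 ↔
      ∃ a b : ℝ, ¬(a = 0 ∧ b = 0) ∧
        B (a • D₁ + b • D₂) D₁ = 0 ∧ B (a • D₁ + b • D₂) D₂ = 0) := by
  have e1 : ∀ α β : ℝ, B (α • D₁ + β • D₂) D₁ = α * B D₁ D₁ + β * B D₁ D₂ := by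
    intro α β
    simp [map_add, map_smul, LinearMap.add_apply, LinearMap.smul_apply, smul_eq_mul,
      hsymm D₂ D₁]
  have e2 : ∀ α β : ℝ, B (α • D₁ + β • D₂) D₂ = α * B D₁ D₂ + β * B D₂ D₂ := by
    intro α β
    simp [map_add, map_smul, LinearMap.add_apply, LinearMap.smul_apply, smul_eq_mul]
  have e3 : ∀ α β : ℝ, B (α • D₁ + β • D₂) (α • D₁ + β • D₂) =
      α * α * B D₁ D₁ + 2 * (α * β) * B D₁ D₂ + β * β * B D₂ D₂ := by
    intro α β
    simp [map_add, map_smul, LinearMap.add_apply, LinearMap.smul_apply, smul_eq_mul,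
      hsymm D₂ D₁]
    ring
  set a := B D₁ D₁
  set b := B D₁ D₂
  set c := B D₂ D₂
  obtain ⟨l, m, hlm⟩ := hpos
  rw [e3] at hlm
  -- main inequality
  have hle : a * c ≤ b ^ 2 := by
    by_contra h
    push_neg at h
    have ha : 0 < a ∨ a < 0 := by
      rcases lt_trichotomy a 0 with h' | h' | h'
      · exact Or.inr h'
      · exfalso
        have hac : a * c = 0 := by rw [h']; ring
        nlinarith [sq_nonneg b]
      · exact Or.inl h'
    rcases ha with ha | ha
    · -- positive definite on the span; contradict hindex
      have hli : LinearIndependent ℝ ![D₁, D₂] := by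
        rw [LinearIndependent.pair_iff]
        intro s t hst
        by_contra hcon
        have h1 : B (s • D₁ + t • D₂) D₁ = 0 := by rw [hst]; simp
        have h2 : B (s • D₁ + t • D₂) D₂ = 0 := by rw [hst]; simp
        rw [e1] at h1; rw [e2] at h2
        have : s * (a * c - b ^ 2) = 0 := by linear_combination c * h1 - b * h2
        have : t * (a * c - b ^ 2) = 0 := by linear_combination a * h2 - b * h1
        have hs : s = 0 := by
          have := ‹s * (a * c - b ^ 2) = 0›
          rcases mul_eq_zero.mp this with h' | h'
          · exact h'
          · exfalso; nlinarith
        have ht : t = 0 := by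
          rcases mul_eq_zero.mp ‹t * (a * c - b ^ 2) = 0› with h' | h'
          · exact h'
          · exfalso; nlinarith
        exact hcon ⟨hs, ht⟩
      obtain ⟨w, hwspan, hwne, hwle⟩ := hindex D₁ D₂ hli
      rw [Submodule.mem_span_pair] at hwspan
      obtain ⟨α, β, hw⟩ := hwspan
      have hαβ : ¬(α = 0 ∧ β = 0) := by
        rintro ⟨rfl, rfl⟩
        simp at hw
        exact hwne hw.symm
      rw [← hw, e3] at hwle
      rcases eq_or_ne β 0 with hβ | hβ
      · subst hβ
        have hα : α ≠ 0 := fun h' => hαβ ⟨h', rfl⟩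
        nlinarith [mul_pos ha (mul_pos (mul_self_pos.mpr hα) ha)]
      · nlinarith [sq_nonneg (a * α + b * β), mul_pos (sub_pos.mpr h) (mul_self_pos.mpr hβ)]
    · -- negative semidefinite; contradict hlm
      nlinarith [sq_nonneg (a * l + b * m), sq_nonneg m]
  refine ⟨hle, ?_, ?_⟩
  · intro heq
    rcases Classical.em (a = 0 ∧ b = 0) with ⟨ha, hb⟩ | hab
    · exact ⟨1, 0, by norm_num, by rw [e1]; rw [ha, hb]; ring, by
        rw [e2, hb]
        have hc : c = 0 ∨ True := Or.inr trivial
        have : a * c = b ^ 2 := heq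
        nlinarith⟩
    · refine ⟨-b, a, ?_, ?_, ?_⟩
      · rintro ⟨h1, h2⟩
        exact hab ⟨h2, neg_eq_zero.mp h1⟩
      · rw [e1]; ring
      · rw [e2]; nlinarith
  · rintro ⟨α, β, hαβ, h1, h2⟩
    rw [e1] at h1; rw [e2] at h2
    have hαd : α * (a * c - b ^ 2) = 0 := by linear_combination c * h1 - b * h2
    have hβd : β * (a * c - b ^ 2) = 0 := by linear_combination a * h2 - b * h1
    rcases Classical.em (α = 0) with hα | hα
    · have hβ : β ≠ 0 := fun h' => hαβ ⟨hα, h'⟩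
      have := (mul_eq_zero.mp hβd).resolve_left hβ
      linarith
    · have := (mul_eq_zero.mp hαd).resolve_left hα
      linarith
end

section
/- Let e_1,...,e_r be integers with e_i ≥ 2, let (λ_i), (μ_i), n be the associated data, and let M be the r×r matrix with M_{ii} = −e_i, M_{i,i+1} = M_{i+1,i} = 1, and 0 elsewhere. Fix 1 ≤ i ≤ r, and let v ∈ ℚ^r be the vector with v_k = (λ_i/n)·μ_k for k ≤ i and v_k = (μ_i/n)·λ_k for k > i. Then (Mv)_i = −1 and (Mv)_j = 0 for all j ≠ i. In particular all entries of v are positive. -/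
/-!
Both μ and λ solve the three-term recurrence x_{k-1} + x_{k+1} = e_k x_k of the string, so v does
too away from position i: it is a multiple of μ up to i and of λ from i on, the two pieces agreeing
at i. Hence (Mv)_j = 0 for j ≠ i, while (Mv)_i equals minus the Wronskian λ_i μ_{i+1} − λ_{i+1} μ_i
divided by n. The Wronskian of two solutions is constant, and at k = 0 it is λ_0 = n. Positivity
holds because e_k ≥ 2 makes the recurrence convex: μ increases from μ_0 = 0 and λ decreases
to λ_{r+1} = 0.
-/

/-- The recurrence `x_{k-1} + x_{k+1} = e_k x_k` for `1 ≤ k ≤ r`, shifted to avoid natural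
subtraction. -/
def IsChainSolution (r : ℕ) (e x : ℕ → ℤ) : Prop :=
  ∀ k < r, x k + x (k + 2) = e (k + 1) * x (k + 1)

namespace IsChainSolution

variable {r : ℕ} {e x y : ℕ → ℤ}

theorem reflect (hx : IsChainSolution r e x) :
    IsChainSolution r (fun k => e (r + 1 - k)) (fun k => x (r + 1 - k)) := by
  intro k hk
  have h := hx (r - 1 - k) (by omega)
  rw [show r - 1 - k = r + 1 - (k + 2) by omega, show r + 1 - (k + 2) + 2 = r + 1 - k by omega,
    show r + 1 - (k + 2) + 1 = r + 1 - (k + 1) by omega] at h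
  linarith

theorem wronskian_eq (hx : IsChainSolution r e x) (hy : IsChainSolution r e y) :
    ∀ k ≤ r, x k * y (k + 1) - x (k + 1) * y k = x 0 * y 1 - x 1 * y 0
  | 0, _ => rfl
  | k + 1, hk => by
    rw [← hx.wronskian_eq hy k (by omega)]
    linear_combination x (k + 1) * hy k hk - y (k + 1) * hx k hk

theorem nonneg_and_lt_succ (hx : IsChainSolution r e x) (he : ∀ k, 1 ≤ k → k ≤ r → 2 ≤ e k)
    (h0 : 0 ≤ x 0) (h01 : x 0 < x 1) : ∀ k ≤ r, 0 ≤ x k ∧ x k < x (k + 1)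
  | 0, _ => ⟨h0, h01⟩
  | k + 1, hk => by
    obtain ⟨hk0, hk1⟩ := hx.nonneg_and_lt_succ he h0 h01 k (by omega)
    have hrec := hx k hk
    have he' := he (k + 1) (by omega) hk
    constructor <;> nlinarith

theorem pos_of_initial (hx : IsChainSolution r e x) (he : ∀ k, 1 ≤ k → k ≤ r → 2 ≤ e k)
    (h0 : 0 ≤ x 0) (h01 : x 0 < x 1) (k : ℕ) (hk1 : 1 ≤ k) (hkr : k ≤ r + 1) : 0 < x k := by
  obtain ⟨hk0, hk⟩ := hx.nonneg_and_lt_succ he h0 h01 (k - 1) (by omega)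
  rw [Nat.sub_add_cancel hk1] at hk
  omega

theorem pos_of_terminal (hx : IsChainSolution r e x) (he : ∀ k, 1 ≤ k → k ≤ r → 2 ≤ e k)
    (h0 : 0 ≤ x (r + 1)) (h01 : x (r + 1) < x r) (k : ℕ) (hkr : k ≤ r) : 0 < x k := by
  have h := hx.reflect.pos_of_initial (fun k hk1 hkr => he _ (by omega) (by omega))
    (by simpa using h0) (by simpa using h01) (r + 1 - k) (by omega) (by omega)
  rwa [Nat.sub_sub_self (by omega)] at h

end IsChainSolution

open Finset in
theorem mulVec_tridiagonal_apply {R : Type*} [CommRing R] {r : ℕ} (a f : ℕ → R)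
    (M : Matrix (Fin r) (Fin r) R)
    (hM : ∀ k j : Fin r, M k j =
      if k = j then -a ((k : ℕ) + 1)
      else if (k : ℕ) + 1 = (j : ℕ) ∨ (j : ℕ) + 1 = (k : ℕ) then 1 else 0)
    (hf0 : f 0 = 0) (hfr : f (r + 1) = 0) (j : Fin r) :
    M.mulVec (fun k => f ((k : ℕ) + 1)) j = f j + f (j + 2) - a (j + 1) * f (j + 1) := by
  have hterm : ∀ k : Fin r, M j k * f (k + 1) =
      (if (k : ℕ) = j then -a (j + 1) * f (j + 1) else 0)
        + (if (k : ℕ) + 1 = j then f (k + 1) else 0)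
        + (if (k : ℕ) = j + 1 then f (j + 2) else 0) := by
    intro k
    simp only [hM, Fin.ext_iff]
    split_ifs <;> grind
  have hleft : (∑ k ∈ range r, if k + 1 = (j : ℕ) then f (k + 1) else 0) = f j := by
    have h := sum_range_succ' (fun m => if m = (j : ℕ) then f m else 0) r
    simp only [sum_ite_eq', mem_range, hf0, ite_self, add_zero] at h
    rw [← h, if_pos (by omega)]
  have hright : (if (j : ℕ) + 1 ∈ range r then f (j + 2) else 0) = f (j + 2) := by
    refine ite_eq_left_iff.2 fun h => ?_
    rw [mem_range, not_lt] at h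
    rw [show (j : ℕ) + 2 = r + 1 by omega, hfr]
  simp only [Matrix.mulVec, dotProduct, hterm, sum_add_distrib]
  rw [Fin.sum_univ_eq_sum_range (fun k => if k = (j : ℕ) then -a (j + 1) * f (j + 1) else 0),
    Fin.sum_univ_eq_sum_range (fun k => if k + 1 = (j : ℕ) then f (k + 1) else 0),
    Fin.sum_univ_eq_sum_range (fun k => if k = (j : ℕ) + 1 then f (j + 2) else 0),
    sum_ite_eq', sum_ite_eq', hleft, hright, if_pos (mem_range.2 j.isLt)]
  ring

/-- The coefficient of `M_i(Θ)` at `Γ_m`; also defined at `m = 0` and `m = r + 1`, where it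
vanishes, so that `v k = chainCoeff … (k + 1)` for `k : Fin r`. -/
def chainCoeff (lam mu : ℕ → ℤ) (n : ℤ) (i m : ℕ) : ℚ :=
  if m ≤ i then (lam i : ℚ) / n * mu m else (mu i : ℚ) / n * lam m

variable {r : ℕ} {e lam mu : ℕ → ℤ} {n : ℤ} {i : ℕ}

theorem chainCoeff_defect (hmu : IsChainSolution r e mu) (hlam : IsChainSolution r e lam)
    (hW : lam i * mu (i + 1) - lam (i + 1) * mu i = n) (hn : n ≠ 0) {j : ℕ} (hj : j < r) :
    chainCoeff lam mu n i j + chainCoeff lam mu n i (j + 2)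
      - e (j + 1) * chainCoeff lam mu n i (j + 1) = if j + 1 = i then -1 else 0 := by
  have hmuj : (mu j : ℚ) + mu (j + 2) = e (j + 1) * mu (j + 1) := by exact_mod_cast hmu j hj
  have hlamj : (lam j : ℚ) + lam (j + 2) = e (j + 1) * lam (j + 1) := by exact_mod_cast hlam j hj
  unfold chainCoeff
  rcases lt_trichotomy (j + 1) i with h | rfl | h
  · rw [if_pos (by omega), if_pos (by omega), if_pos (by omega), if_neg (by omega)]
    linear_combination (lam i / n : ℚ) * hmuj
  · have hWq : (lam (j + 1) * mu (j + 2) - lam (j + 2) * mu (j + 1) : ℚ) = n := by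
      exact_mod_cast hW
    rw [if_pos (by omega), if_neg (by omega), if_pos le_rfl, if_pos rfl]
    field_simp
    linear_combination lam (j + 1) * hmuj - hWq
  · have hleft :
        (if j ≤ i then (lam i : ℚ) / n * mu j else mu i / n * lam j) = mu i / n * lam j := by
      split_ifs with hji
      · rw [show j = i by omega]; ring
      · rfl
    rw [hleft, if_neg (by omega), if_neg (by omega), if_neg (by omega)]
    linear_combination (mu i / n : ℚ) * hlamj

theorem chainCoeff_pos (hmu : ∀ k, 1 ≤ k → k ≤ r + 1 → 0 < mu k) (hlam : ∀ k ≤ r, 0 < lam k)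
    (hn : 0 < n) (hi1 : 1 ≤ i) (hir : i ≤ r) {m : ℕ} (hm1 : 1 ≤ m) (hmr : m ≤ r) :
    0 < chainCoeff lam mu n i m := by
  have hnq : (0 : ℚ) < n := by exact_mod_cast hn
  unfold chainCoeff
  split_ifs with hmi
  · have h1 : (0 : ℚ) < lam i := by exact_mod_cast hlam i hir
    have h2 : (0 : ℚ) < mu m := by exact_mod_cast hmu m hm1 (by omega)
    positivity
  · have h1 : (0 : ℚ) < mu i := by exact_mod_cast hmu i hi1 (by omega)
    have h2 : (0 : ℚ) < lam m := by exact_mod_cast hlam m hmr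
    positivity

/-- The divisor M_i(Θ) on a Hirzebruch–Jung string: with intersection matrix M
(M_{kk} = −e_k, M_{k,k+1} = M_{k+1,k} = 1, 0 elsewhere) and v_k = (λ_i/n)μ_k for k ≤ i,
v_k = (μ_i/n)λ_k for k > i, one has (Mv)_i = −1, (Mv)_j = 0 for j ≠ i, and all v_k > 0. -/
theorem stmt8 (r : ℕ) (e lam mu : ℕ → ℤ)
    (he : ∀ i, 1 ≤ i → i ≤ r → 2 ≤ e i)
    (hmu0 : mu 0 = 0) (hmu1 : mu 1 = 1)
    (hmu : ∀ k, 1 ≤ k → k ≤ r → mu (k + 1) = e k * mu k - mu (k - 1))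
    (hlamtop : lam (r + 1) = 0) (hlamr : lam r = 1)
    (hlam : ∀ k, 1 ≤ k → k ≤ r → lam (k - 1) = e k * lam k - lam (k + 1))
    (hn : lam 0 = mu (r + 1))
    (M : Matrix (Fin r) (Fin r) ℚ)
    (hM : ∀ k j : Fin r, M k j =
      if k = j then -(e ((k : ℕ) + 1) : ℚ)
      else if (k : ℕ) + 1 = (j : ℕ) ∨ (j : ℕ) + 1 = (k : ℕ) then 1 else 0)
    (i : ℕ) (hi1 : 1 ≤ i) (hir : i ≤ r)
    (v : Fin r → ℚ)
    (hv : ∀ k : Fin r, v k =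
      if (k : ℕ) + 1 ≤ i then (lam i : ℚ) / (mu (r + 1) : ℚ) * (mu ((k : ℕ) + 1) : ℚ)
      else (mu i : ℚ) / (mu (r + 1) : ℚ) * (lam ((k : ℕ) + 1) : ℚ)) :
    (∀ j : Fin r, M.mulVec v j = if (j : ℕ) + 1 = i then -1 else 0) ∧
    (∀ k : Fin r, 0 < v k) := by
  have hmuS : IsChainSolution r e mu := fun k hk => by
    have h := hmu (k + 1) (by omega) (by omega)
    simp only [Nat.add_sub_cancel] at h
    linear_combination h
  have hlamS : IsChainSolution r e lam := fun k hk => by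
    have h := hlam (k + 1) (by omega) (by omega)
    simp only [Nat.add_sub_cancel] at h
    linear_combination h
  have hmu_pos := hmuS.pos_of_initial he (by rw [hmu0]) (by rw [hmu0, hmu1]; exact one_pos)
  have hlam_pos :=
    hlamS.pos_of_terminal he (by rw [hlamtop]) (by rw [hlamtop, hlamr]; exact one_pos)
  have hW : lam i * mu (i + 1) - lam (i + 1) * mu i = mu (r + 1) := by
    rw [hlamS.wronskian_eq hmuS i hir, hmu0, hmu1, hn]; ring
  have hn_pos : 0 < mu (r + 1) := hmu_pos (r + 1) (by omega) le_rfl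
  obtain rfl : v = fun k : Fin r => chainCoeff lam mu (mu (r + 1)) i ((k : ℕ) + 1) := funext hv
  refine ⟨fun j => ?_, fun k => ?_⟩
  · rw [mulVec_tridiagonal_apply (fun k => (e k : ℚ)) _ M hM (by simp [chainCoeff, hmu0])
      (by simp [chainCoeff, hlamtop, show ¬r + 1 ≤ i by omega])]
    exact chainCoeff_defect hmuS hlamS hW hn_pos.ne' j.isLt
  · exact chainCoeff_pos hmu_pos hlam_pos hn_pos hi1 hir (by omega) k.isLt
end

section
/- With e_1,...,e_r ≥ 2, sequences λ, μ, n as usual, let a_1,...,a_r be real numbers (representing A·Γ_k) with a_k ≤ 0 for all k ≥ 2, and define γ_i := (λ_i/n)·Σ_{k=1}^{i} μ_k a_k + (μ_i/n)·Σ_{k=i+1}^{r} λ_k a_k. Then: (i) γ_i ≥ λ_i γ_r for all i; (ii) all γ_i ≥ 0 together with γ_r > 0 holds if and only if Σ_{k=1}^{r} μ_k a_k > 0; and (iii) in that case 0 < γ_i < a_1 for all i. -/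
/-!
Both `μ` and the reversed sequence `λ` solve `x (k - 1) + x (k + 1) = e k * x k` with `e k ≥ 2`
and start `0, 1`; such a solution is convex as long as it is nonnegative, hence strictly
increasing. The Casoratian `λ_k μ_{k+1} - λ_{k+1} μ_k` of two solutions is constant, equal to `n`;
this gives `λ_0 = n`, and applied to the solution `k ↦ λ_i μ_k - μ_i λ_k` it gives
`λ_k μ_i ≤ λ_i μ_k` for `i ≤ k`. Then `n (γ_i - λ_i γ_r) = Σ_{k > i} (μ_i λ_k - λ_i μ_k) a_k` is a
sum of products of two nonpositive numbers, which is (i). Parts (ii) and (iii) follow from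
`n γ_r = Σ μ_k a_k`, `1 ≤ λ_i < n` and `Σ μ_k a_k ≤ a_1`.
-/

open Finset

section Recurrence

variable {R : Type*} [CommRing R]

def IsHJRecurrence (e : ℕ → R) (r : ℕ) (x : ℕ → R) : Prop :=
  ∀ k, 1 ≤ k → k ≤ r → x (k - 1) + x (k + 1) = e k * x k

namespace IsHJRecurrence

variable {e x y : ℕ → R} {r : ℕ}

theorem reverse (hx : IsHJRecurrence e r x) :
    IsHJRecurrence (fun k => e (r + 1 - k)) r (fun k => x (r + 1 - k)) := by
  intro k hk1 hkr
  have hrec := hx (r + 1 - k) (by omega) (by omega)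
  rw [show r + 1 - k - 1 = r + 1 - (k + 1) by omega,
    show r + 1 - k + 1 = r + 1 - (k - 1) by omega] at hrec
  linear_combination hrec

theorem mul_sub_mul (hx : IsHJRecurrence e r x) (hy : IsHJRecurrence e r y) (c d : R) :
    IsHJRecurrence e r (fun k => c * x k - d * y k) := fun k hk1 hkr => by
  linear_combination c * hx k hk1 hkr - d * hy k hk1 hkr

theorem casoratian_eq (hx : IsHJRecurrence e r x) (hy : IsHJRecurrence e r y) {k : ℕ}
    (hk : k ≤ r) :
    x k * y (k + 1) - x (k + 1) * y k = x r * y (r + 1) - x (r + 1) * y r := by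
  induction hk using Nat.decreasingInduction with
  | self => rfl
  | of_succ k hk ih =>
    have hx' := hx (k + 1) (by omega) hk
    have hy' := hy (k + 1) (by omega) hk
    rw [Nat.add_sub_cancel] at hx' hy'
    linear_combination ih - x (k + 1) * hy' + y (k + 1) * hx'

variable [LinearOrder R] [IsStrictOrderedRing R]

/-- Convexity: `x (k + 1) - x k = (x k - x (k - 1)) + (e k - 2) x k`. -/
theorem nonneg_and_add_le_of_two_le (he : ∀ k, 1 ≤ k → k ≤ r → 2 ≤ e k)
    (hx : IsHJRecurrence e r x) {s : ℕ} {d : R} (hd : 0 ≤ d) (hs : 0 ≤ x s)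
    (hs' : x s + d ≤ x (s + 1)) {k : ℕ} (hsk : s ≤ k) (hkr : k ≤ r) :
    0 ≤ x k ∧ x k + d ≤ x (k + 1) := by
  induction k, hsk using Nat.le_induction with
  | base => exact ⟨hs, hs'⟩
  | succ k _ ih =>
    obtain ⟨hk, hk'⟩ := ih (by omega)
    have hrec := hx (k + 1) (by omega) hkr
    rw [Nat.add_sub_cancel] at hrec
    have hx1 : 0 ≤ x (k + 1) := by linarith
    have := mul_le_mul_of_nonneg_right (he (k + 1) (by omega) hkr) hx1
    constructor <;> linarith

theorem strictMonoOn (he : ∀ k, 1 ≤ k → k ≤ r → 2 ≤ e k) (hx : IsHJRecurrence e r x)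
    (h0 : 0 ≤ x 0) (h01 : x 0 < x 1) : StrictMonoOn x (Set.Icc 0 (r + 1)) := by
  refine strictMonoOn_of_lt_add_one Set.ordConnected_Icc fun k _ _ hk => ?_
  have hstep := (hx.nonneg_and_add_le_of_two_le he (sub_pos.2 h01).le h0 (by linarith)
    (Nat.zero_le k) (by simp only [Set.mem_Icc] at hk; omega)).2
  linarith

end IsHJRecurrence

variable [LinearOrder R]

structure HJChainData (r : ℕ) (e lam mu : ℕ → R) : Prop where
  two_le : ∀ k, 1 ≤ k → k ≤ r → 2 ≤ e k
  mu_zero : mu 0 = 0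
  mu_one : mu 1 = 1
  mu_rec : IsHJRecurrence e r mu
  lam_succ_top : lam (r + 1) = 0
  lam_top : lam r = 1
  lam_rec : IsHJRecurrence e r lam

namespace HJChainData

variable {r : ℕ} {e lam mu : ℕ → R}

theorem casoratian_eq (h : HJChainData r e lam mu) {k : ℕ} (hk : k ≤ r) :
    lam k * mu (k + 1) - lam (k + 1) * mu k = mu (r + 1) := by
  rw [h.lam_rec.casoratian_eq h.mu_rec hk, h.lam_top, h.lam_succ_top]
  ring

theorem lam_zero (h : HJChainData r e lam mu) : lam 0 = mu (r + 1) := by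
  simpa [h.mu_zero, h.mu_one] using h.casoratian_eq (Nat.zero_le r)

variable [IsStrictOrderedRing R]

theorem mu_strictMonoOn (h : HJChainData r e lam mu) : StrictMonoOn mu (Set.Icc 0 (r + 1)) :=
  h.mu_rec.strictMonoOn h.two_le h.mu_zero.ge (by rw [h.mu_zero, h.mu_one]; exact one_pos)

theorem lam_strictAntiOn (h : HJChainData r e lam mu) :
    StrictAntiOn lam (Set.Icc 0 (r + 1)) := by
  have hrev := h.lam_rec.reverse.strictMonoOn (fun k hk1 hkr => h.two_le _ (by omega) (by omega))
    (by simp [h.lam_succ_top]) (by simp [h.lam_succ_top, h.lam_top])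
  intro i hi k hk hik
  simp only [Set.mem_Icc] at hi hk
  have hlt := hrev (a := r + 1 - k) (b := r + 1 - i) (by simp only [Set.mem_Icc]; omega)
    (by simp only [Set.mem_Icc]; omega) (by omega)
  simpa only [Nat.sub_sub_self hi.2, Nat.sub_sub_self hk.2] using hlt

theorem mu_nonneg (h : HJChainData r e lam mu) {k : ℕ} (hk : k ≤ r + 1) : 0 ≤ mu k :=
  h.mu_zero ▸ h.mu_strictMonoOn.monotoneOn (by simp) (by simp [hk]) (Nat.zero_le k)

theorem mu_succ_top_pos (h : HJChainData r e lam mu) : 0 < mu (r + 1) :=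
  h.mu_zero ▸ h.mu_strictMonoOn (by simp) (by simp) (Nat.succ_pos r)

theorem lam_nonneg (h : HJChainData r e lam mu) {k : ℕ} (hk : k ≤ r + 1) : 0 ≤ lam k :=
  h.lam_succ_top ▸ h.lam_strictAntiOn.antitoneOn (by simp [hk]) (by simp) hk

theorem one_le_lam (h : HJChainData r e lam mu) {k : ℕ} (hk : k ≤ r) : 1 ≤ lam k :=
  h.lam_top ▸ h.lam_strictAntiOn.antitoneOn (by simp [hk.trans r.le_succ]) (by simp) hk

theorem lam_lt_mu_succ_top (h : HJChainData r e lam mu) {k : ℕ} (hk1 : 1 ≤ k)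
    (hk : k ≤ r + 1) : lam k < mu (r + 1) :=
  h.lam_zero ▸ h.lam_strictAntiOn (by simp) (by simp [hk]) (by omega)

theorem lam_mul_mu_le (h : HJChainData r e lam mu) {i k : ℕ} (hik : i ≤ k) (hk : k ≤ r) :
    lam k * mu i ≤ lam i * mu k := by
  have hn := h.mu_succ_top_pos
  have hcas := h.casoratian_eq (hik.trans hk)
  have hD := (h.mu_rec.mul_sub_mul h.lam_rec (lam i) (mu i)).nonneg_and_add_le_of_two_le
    h.two_le le_rfl (by simp only [mul_comm, sub_self, le_refl]) (by linarith) hik hk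
  linarith [hD.1]

end HJChainData

end Recurrence

section Coefficients

variable {K : Type*} [Field K]

/-- The coefficient `γ_i`, with `n = mu (r + 1)`. -/
def hjCoeff (r : ℕ) (lam mu a : ℕ → K) (i : ℕ) : K :=
  lam i / mu (r + 1) * ∑ k ∈ Icc 1 i, mu k * a k
    + mu i / mu (r + 1) * ∑ k ∈ Icc (i + 1) r, lam k * a k

variable {r i : ℕ} {e lam mu a : ℕ → K}

theorem hjCoeff_top (hlam : lam r = 1) :
    hjCoeff r lam mu a r = (∑ k ∈ Icc 1 r, mu k * a k) / mu (r + 1) := by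
  simp [hjCoeff, hlam, div_eq_inv_mul]

theorem hjCoeff_sub_lam_mul_top (hlam : lam r = 1) (hi : i ≤ r) :
    hjCoeff r lam mu a i - lam i * hjCoeff r lam mu a r
      = (∑ k ∈ Ioc i r, (mu i * lam k - lam i * mu k) * a k) / mu (r + 1) := by
  have hsplit : ∑ k ∈ Icc 1 r, mu k * a k
      = ∑ k ∈ Icc 1 i, mu k * a k + ∑ k ∈ Ioc i r, mu k * a k := by
    have hIcc : ∀ j, Icc 1 j = Ioc 0 j := Finset.Icc_add_one_left_eq_Ioc 0
    rw [hIcc, hIcc, sum_Ioc_consecutive _ (Nat.zero_le i) hi]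
  rw [hjCoeff_top hlam, hsplit, hjCoeff, Finset.Icc_add_one_left_eq_Ioc]
  simp only [sub_mul, mul_assoc, Finset.sum_sub_distrib, ← Finset.mul_sum, div_eq_mul_inv]
  ring

variable [LinearOrder K] [IsStrictOrderedRing K]

theorem sum_Icc_one_mul_le {m : ℕ → K} (hi : 1 ≤ i) (hm1 : m 1 = 1)
    (hm : ∀ k, 2 ≤ k → k ≤ i → 0 ≤ m k) (ha : ∀ k, 2 ≤ k → k ≤ i → a k ≤ 0) :
    ∑ k ∈ Icc 1 i, m k * a k ≤ a 1 := by
  rw [Icc_eq_cons_Ioc hi, sum_cons, hm1, one_mul]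
  refine add_le_of_nonpos_right (sum_nonpos fun k hk => ?_)
  obtain ⟨hk1, hki⟩ := mem_Ioc.1 hk
  exact mul_nonpos_of_nonneg_of_nonpos (hm k hk1 hki) (ha k hk1 hki)

namespace HJChainData

theorem hjCoeff_top_pos_iff (h : HJChainData r e lam mu) :
    0 < hjCoeff r lam mu a r ↔ 0 < ∑ k ∈ Icc 1 r, mu k * a k := by
  rw [hjCoeff_top h.lam_top, div_pos_iff_of_pos_right h.mu_succ_top_pos]

theorem lam_mul_hjCoeff_top_le (h : HJChainData r e lam mu) (hi : i ≤ r)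
    (ha : ∀ k ∈ Ioc i r, a k ≤ 0) : lam i * hjCoeff r lam mu a r ≤ hjCoeff r lam mu a i := by
  rw [← sub_nonneg, hjCoeff_sub_lam_mul_top h.lam_top hi]
  refine div_nonneg (sum_nonneg fun k hk => mul_nonneg_of_nonpos_of_nonpos ?_ (ha k hk))
    h.mu_succ_top_pos.le
  have := h.lam_mul_mu_le (mem_Ioc.1 hk).1.le (mem_Ioc.1 hk).2
  linarith

theorem hjCoeff_pos (h : HJChainData r e lam mu) (hi : i ≤ r) (ha : ∀ k ∈ Ioc i r, a k ≤ 0)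
    (hpos : 0 < hjCoeff r lam mu a r) : 0 < hjCoeff r lam mu a i :=
  calc 0 < hjCoeff r lam mu a r := hpos
    _ ≤ lam i * hjCoeff r lam mu a r := le_mul_of_one_le_left hpos.le (h.one_le_lam hi)
    _ ≤ hjCoeff r lam mu a i := h.lam_mul_hjCoeff_top_le hi ha

theorem hjCoeff_le (h : HJChainData r e lam mu) (hi1 : 1 ≤ i) (hi : i ≤ r)
    (ha : ∀ k, 2 ≤ k → k ≤ r → a k ≤ 0) :
    hjCoeff r lam mu a i ≤ lam i / mu (r + 1) * a 1 := by
  have hn := h.mu_succ_top_pos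
  have hS := sum_Icc_one_mul_le hi1 h.mu_one (a := a)
    (fun k _ hki => h.mu_nonneg (by omega)) (fun k hk2 hki => ha k hk2 (hki.trans hi))
  have hT : ∑ k ∈ Icc (i + 1) r, lam k * a k ≤ 0 := sum_nonpos fun k hk => by
    simp only [mem_Icc] at hk
    exact mul_nonpos_of_nonneg_of_nonpos (h.lam_nonneg (by omega)) (ha k (by omega) hk.2)
  exact add_le_of_le_of_nonpos
    (mul_le_mul_of_nonneg_left hS (div_nonneg (h.lam_nonneg (by omega)) hn.le))
    (mul_nonpos_of_nonneg_of_nonpos (div_nonneg (h.mu_nonneg (by omega)) hn.le) hT)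

theorem hjCoeff_lt (h : HJChainData r e lam mu) (hi1 : 1 ≤ i) (hi : i ≤ r)
    (ha : ∀ k, 2 ≤ k → k ≤ r → a k ≤ 0) (hpos : 0 < ∑ k ∈ Icc 1 r, mu k * a k) :
    hjCoeff r lam mu a i < a 1 := by
  have ha1 : 0 < a 1 := hpos.trans_le <| sum_Icc_one_mul_le (hi1.trans hi) h.mu_one
    (fun k _ hkr => h.mu_nonneg (by omega)) ha
  have hlam : lam i / mu (r + 1) < 1 :=
    (div_lt_one h.mu_succ_top_pos).2 (h.lam_lt_mu_succ_top hi1 (by omega))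
  exact (h.hjCoeff_le hi1 hi ha).trans_lt (mul_lt_of_lt_one_left ha1 hlam)

end HJChainData

end Coefficients

theorem stmt9_general (r : ℕ) (e lam mu : ℕ → ℤ)
    (he : ∀ i, 1 ≤ i → i ≤ r → 2 ≤ e i)
    (hmu0 : mu 0 = 0) (hmu1 : mu 1 = 1)
    (hmu : ∀ k, 1 ≤ k → k ≤ r → mu (k + 1) = e k * mu k - mu (k - 1))
    (hlamtop : lam (r + 1) = 0) (hlamr : lam r = 1)
    (hlam : ∀ k, 1 ≤ k → k ≤ r → lam (k - 1) = e k * lam k - lam (k + 1))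
    (a : ℕ → ℝ) (ha : ∀ k, 2 ≤ k → k ≤ r → a k ≤ 0)
    (g : ℕ → ℝ)
    (hg : ∀ i, g i = (lam i : ℝ) / (mu (r + 1) : ℝ) * ∑ k ∈ Finset.Icc 1 i, (mu k : ℝ) * a k
        + (mu i : ℝ) / (mu (r + 1) : ℝ) * ∑ k ∈ Finset.Icc (i + 1) r, (lam k : ℝ) * a k) :
    (∀ i, 1 ≤ i → i ≤ r → (lam i : ℝ) * g r ≤ g i) ∧
    (((∀ i, 1 ≤ i → i ≤ r → 0 ≤ g i) ∧ 0 < g r) ↔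
      0 < ∑ k ∈ Finset.Icc 1 r, (mu k : ℝ) * a k) ∧
    (0 < ∑ k ∈ Finset.Icc 1 r, (mu k : ℝ) * a k →
      ∀ i, 1 ≤ i → i ≤ r → 0 < g i ∧ g i < a 1) := by
  have hD : HJChainData r (fun k => (e k : ℝ)) (fun k => (lam k : ℝ)) (fun k => (mu k : ℝ)) :=
    { two_le := fun k hk1 hkr => by exact_mod_cast he k hk1 hkr
      mu_zero := by simp [hmu0]
      mu_one := by simp [hmu1]
      mu_rec := fun k hk1 hkr => by push_cast [hmu k hk1 hkr]; ring
      lam_succ_top := by simp [hlamtop]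
      lam_top := by simp [hlamr]
      lam_rec := fun k hk1 hkr => by push_cast [hlam k hk1 hkr]; ring }
  obtain rfl : g = hjCoeff r (fun k => (lam k : ℝ)) (fun k => (mu k : ℝ)) a := funext hg
  have ha' : ∀ i, 1 ≤ i → ∀ k ∈ Ioc i r, a k ≤ 0 := fun i hi k hk =>
    ha k (by simp only [mem_Ioc] at hk; omega) (mem_Ioc.1 hk).2
  refine ⟨fun i hi1 hi => hD.lam_mul_hjCoeff_top_le hi (ha' i hi1), ⟨?_, fun hS => ?_⟩,
    fun hS i hi1 hi => ⟨?_, hD.hjCoeff_lt hi1 hi ha hS⟩⟩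
  · exact fun ⟨_, hpos⟩ => hD.hjCoeff_top_pos_iff.1 hpos
  · have hpos := hD.hjCoeff_top_pos_iff.2 hS
    exact ⟨fun i hi1 hi => (hD.hjCoeff_pos hi (ha' i hi1) hpos).le, hpos⟩
  · exact hD.hjCoeff_pos hi (ha' i hi1) (hD.hjCoeff_top_pos_iff.2 hS)

/-- Coefficients of E(A,Θ): with a_k ≤ 0 for k ≥ 2 and
γ_i = (λ_i/n)Σ_{k≤i} μ_k a_k + (μ_i/n)Σ_{k>i} λ_k a_k, one has (i) γ_i ≥ λ_i γ_r;
(ii) all γ_i ≥ 0 and γ_r > 0 iff Σ μ_k a_k > 0; (iii) in that case 0 < γ_i < a_1. -/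
theorem stmt9 (r : ℕ) (hr : 1 ≤ r) (e lam mu : ℕ → ℤ)
    (he : ∀ i, 1 ≤ i → i ≤ r → 2 ≤ e i)
    (hmu0 : mu 0 = 0) (hmu1 : mu 1 = 1)
    (hmu : ∀ k, 1 ≤ k → k ≤ r → mu (k + 1) = e k * mu k - mu (k - 1))
    (hlamtop : lam (r + 1) = 0) (hlamr : lam r = 1)
    (hlam : ∀ k, 1 ≤ k → k ≤ r → lam (k - 1) = e k * lam k - lam (k + 1))
    (a : ℕ → ℝ) (ha : ∀ k, 2 ≤ k → k ≤ r → a k ≤ 0)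
    (g : ℕ → ℝ)
    (hg : ∀ i, g i = (lam i : ℝ) / (mu (r + 1) : ℝ) * ∑ k ∈ Finset.Icc 1 i, (mu k : ℝ) * a k
        + (mu i : ℝ) / (mu (r + 1) : ℝ) * ∑ k ∈ Finset.Icc (i + 1) r, (lam k : ℝ) * a k) :
    (∀ i, 1 ≤ i → i ≤ r → (lam i : ℝ) * g r ≤ g i) ∧
    (((∀ i, 1 ≤ i → i ≤ r → 0 ≤ g i) ∧ 0 < g r) ↔
      0 < ∑ k ∈ Finset.Icc 1 r, (mu k : ℝ) * a k) ∧
    (0 < ∑ k ∈ Finset.Icc 1 r, (mu k : ℝ) * a k →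
      ∀ i, 1 ≤ i → i ≤ r → 0 < g i ∧ g i < a 1) :=
  stmt9_general r e lam mu he hmu0 hmu1 hmu hlamtop hlamr hlam a ha g hg
end

section
/- With e_1,...,e_r ≥ 2 and standard data λ, μ, n, let d_1,...,d_r ≥ 0 be rationals (representing D·Γ_k), and set a_k := −(K_F + D)·Γ_k, i.e. a_1 = 1 − d_1 and a_k = −d_k for k ≥ 2 (using K_F·Γ_1 = −1 and K_F·Γ_k = 0 for k ≥ 2 on an F-chain). Then the chain is a (D,F)-chain (i.e. all γ_i ≥ 0 and γ_r > 0 in the associated divisor M(D,Θ)) if and only if Σ_{k=1}^{r} μ_k d_k < 1. In particular, in that case d_k < 1/μ_k ≤ 1/k for every k. -/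
theorem muGrow (r : ℕ) (e mu : ℕ → ℤ) (he : ∀ i, 1 ≤ i → i ≤ r → 2 ≤ e i)
    (hmu0 : mu 0 = 0) (hmu1 : mu 1 = 1)
    (hmu : ∀ k, 1 ≤ k → k ≤ r → mu (k + 1) = e k * mu k - mu (k - 1)) :
    ∀ k, k ≤ r → (k : ℤ) ≤ mu k ∧ mu k + 1 ≤ mu (k + 1) := by
  intro k
  induction k with
  | zero => intro _; simp [hmu0, hmu1]
  | succ k ih =>
    intro hk1
    obtain ⟨h1, h2⟩ := ih (by omega)
    refine ⟨by push_cast; omega, ?_⟩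
    have hrec := hmu (k + 1) (by omega) hk1
    simp only [Nat.add_sub_cancel] at hrec
    have hee := he (k + 1) (by omega) hk1
    nlinarith [mul_le_mul_of_nonneg_right hee (show (0:ℤ) ≤ mu (k+1) by omega)]

theorem lamFacts (r : ℕ) (e lam : ℕ → ℤ) (he : ∀ i, 1 ≤ i → i ≤ r → 2 ≤ e i)
    (hlamtop : lam (r + 1) = 0) (hlamr : lam r = 1)
    (hlam : ∀ k, 1 ≤ k → k ≤ r → lam (k - 1) = e k * lam k - lam (k + 1)) :
    ∀ k, k ≤ r → 0 ≤ lam (k + 1) ∧ lam (k + 1) ≤ lam k := by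
  have aux : ∀ j k, k ≤ r → r ≤ k + j → 0 ≤ lam (k + 1) ∧ lam (k + 1) ≤ lam k := by
    intro j
    induction j with
    | zero =>
      intro k hk1 hk2
      have : k = r := by omega
      subst this
      simp [hlamtop, hlamr]
    | succ j ih =>
      intro k hk1 hk2
      by_cases hkr : k = r
      · subst hkr; simp [hlamtop, hlamr]
      · have hk1' : k + 1 ≤ r := by omega
        obtain ⟨h1, h2⟩ := ih (k + 1) hk1' (by omega)
        have hrec := hlam (k + 1) (by omega) hk1'
        simp only [Nat.add_sub_cancel] at hrec
        have hee := he (k + 1) (by omega) hk1'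
        constructor
        · linarith
        · nlinarith [mul_le_mul_of_nonneg_right hee (by linarith : (0:ℤ) ≤ lam (k + 1))]
  intro k hk; exact aux r k hk (by omega)

theorem Wconst (r : ℕ) (e lam mu : ℕ → ℤ)
    (hmu : ∀ k, 1 ≤ k → k ≤ r → mu (k + 1) = e k * mu k - mu (k - 1))
    (hlamtop : lam (r + 1) = 0) (hlamr : lam r = 1)
    (hlam : ∀ k, 1 ≤ k → k ≤ r → lam (k - 1) = e k * lam k - lam (k + 1)) :
    ∀ k, k ≤ r → lam k * mu (k + 1) - lam (k + 1) * mu k = mu (r + 1) := by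
  have aux : ∀ j k, k ≤ r → r ≤ k + j →
      lam k * mu (k + 1) - lam (k + 1) * mu k = mu (r + 1) := by
    intro j
    induction j with
    | zero =>
      intro k hk1 hk2
      have : k = r := by omega
      subst this
      rw [hlamtop, hlamr]; ring
    | succ j ih =>
      intro k hk1 hk2
      by_cases hkr : k = r
      · subst hkr; rw [hlamtop, hlamr]; ring
      · have hk1' : k + 1 ≤ r := by omega
        have ihk := ih (k + 1) hk1' (by omega)
        have h1 := hlam (k + 1) (by omega) hk1'
        simp only [Nat.add_sub_cancel] at h1
        have h2 := hmu (k + 1) (by omega) hk1'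
        simp only [Nat.add_sub_cancel] at h2
        linear_combination (mu (k + 1)) * h1 - (lam (k + 1)) * h2 + ihk
  intro k hk; exact aux r k hk (by omega)

theorem Vnonneg (r : ℕ) (e lam mu : ℕ → ℤ) (he : ∀ i, 1 ≤ i → i ≤ r → 2 ≤ e i)
    (hmu0 : mu 0 = 0) (hmu1 : mu 1 = 1)
    (hmu : ∀ k, 1 ≤ k → k ≤ r → mu (k + 1) = e k * mu k - mu (k - 1))
    (hlamtop : lam (r + 1) = 0) (hlamr : lam r = 1)
    (hlam : ∀ k, 1 ≤ k → k ≤ r → lam (k - 1) = e k * lam k - lam (k + 1)) :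
    ∀ i, 1 ≤ i → i ≤ r → ∀ k, i ≤ k → k ≤ r → 0 ≤ lam i * mu k - lam k * mu i := by
  intro i hi1 hir
  have hn : (0:ℤ) ≤ mu (r + 1) := by
    have := muGrow r e mu he hmu0 hmu1 hmu r le_rfl
    omega
  have key : ∀ k, i ≤ k → k ≤ r →
      0 ≤ lam i * mu k - lam k * mu i ∧
      lam i * mu k - lam k * mu i ≤ lam i * mu (k + 1) - lam (k + 1) * mu i := by
    intro k hk
    induction k, hk using Nat.le_induction with
    | base =>
      intro _
      have hw := Wconst r e lam mu hmu hlamtop hlamr hlam i hir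
      constructor
      · linarith [sq_nonneg (lam i * mu i)]
      · linarith
    | succ k hik ih =>
      intro hk1
      obtain ⟨h1, h2⟩ := ih (by omega)
      have hm := hmu (k + 1) (by omega) hk1
      simp only [Nat.add_sub_cancel] at hm
      have hl := hlam (k + 1) (by omega) hk1
      simp only [Nat.add_sub_cancel] at hl
      have hee := he (k + 1) (by omega) hk1
      have hV2 : lam i * mu (k + 1 + 1) - lam (k + 1 + 1) * mu i =
          e (k + 1) * (lam i * mu (k + 1) - lam (k + 1) * mu i)
            - (lam i * mu k - lam k * mu i) := by
        linear_combination (lam i) * hm - (mu i) * hl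
      constructor
      · linarith
      · nlinarith [mul_le_mul_of_nonneg_right hee (by linarith :
          (0:ℤ) ≤ lam i * mu (k + 1) - lam (k + 1) * mu i)]
  intro k hk1 hk2; exact (key k hk1 hk2).1

/-- (D,F)-chain criterion: with d_k = D·Γ_k ≥ 0 and a_1 = 1 − d_1, a_k = −d_k (k ≥ 2),
the coefficients γ_i of M(D,Θ) are all ≥ 0 with γ_r > 0 iff Σ_{k=1}^r μ_k d_k < 1;
in that case d_k < 1/μ_k ≤ 1/k for every k. -/
theorem stmt10 (r : ℕ) (hr : 1 ≤ r) (e lam mu : ℕ → ℤ)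
    (he : ∀ i, 1 ≤ i → i ≤ r → 2 ≤ e i)
    (hmu0 : mu 0 = 0) (hmu1 : mu 1 = 1)
    (hmu : ∀ k, 1 ≤ k → k ≤ r → mu (k + 1) = e k * mu k - mu (k - 1))
    (hlamtop : lam (r + 1) = 0) (hlamr : lam r = 1)
    (hlam : ∀ k, 1 ≤ k → k ≤ r → lam (k - 1) = e k * lam k - lam (k + 1))
    (d : ℕ → ℚ) (hd : ∀ k, 1 ≤ k → k ≤ r → 0 ≤ d k)
    (g : ℕ → ℚ)
    (hg : ∀ i, 1 ≤ i → i ≤ r →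
      g i = (lam i : ℚ) / (mu (r + 1) : ℚ)
              * ((mu 1 : ℚ) * (1 - d 1) - ∑ k ∈ Finset.Icc 2 i, (mu k : ℚ) * d k)
          - (mu i : ℚ) / (mu (r + 1) : ℚ) * ∑ k ∈ Finset.Icc (i + 1) r, (lam k : ℚ) * d k) :
    (((∀ i, 1 ≤ i → i ≤ r → 0 ≤ g i) ∧ 0 < g r) ↔
      ∑ k ∈ Finset.Icc 1 r, (mu k : ℚ) * d k < 1) ∧
    (∑ k ∈ Finset.Icc 1 r, (mu k : ℚ) * d k < 1 →
      ∀ k, 1 ≤ k → k ≤ r → d k < 1 / (mu k : ℚ) ∧ 1 / (mu k : ℚ) ≤ 1 / (k : ℚ)) := by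
  have hmuk := muGrow r e mu he hmu0 hmu1 hmu
  have hnZ : (0:ℤ) < mu (r + 1) := by have := hmuk r le_rfl; omega
  have hn : (0:ℚ) < (mu (r + 1) : ℚ) := by exact_mod_cast hnZ
  have hmupos : ∀ k, 1 ≤ k → k ≤ r → (0:ℚ) < (mu k : ℚ) := by
    intro k h1 h2
    have := (hmuk k h2).1
    have : (0:ℤ) < mu k := by omega
    exact_mod_cast this
  have hlamnn : ∀ k, 1 ≤ k → k ≤ r → (0:ℚ) ≤ (lam k : ℚ) := by
    intro k h1 h2
    have h := lamFacts r e lam he hlamtop hlamr hlam (k - 1) (by omega)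
    rw [show k - 1 + 1 = k by omega] at h
    exact_mod_cast h.1
  -- split off the first term of the sum
  have hsplit1 : ∀ i, 1 ≤ i →
      (mu 1 : ℚ) * (1 - d 1) - ∑ k ∈ Finset.Icc 2 i, (mu k : ℚ) * d k
        = 1 - ∑ k ∈ Finset.Icc 1 i, (mu k : ℚ) * d k := by
    intro i hi
    have hins : Finset.Icc 1 i = insert 1 (Finset.Icc 2 i) := by
      ext x; simp [Finset.mem_Icc]; omega
    rw [hins, Finset.sum_insert (by simp)]
    rw [hmu1]; push_cast; ring
  have hsplit2 : ∀ i, 1 ≤ i → i ≤ r →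
      ∑ k ∈ Finset.Icc 1 r, (mu k : ℚ) * d k
        = ∑ k ∈ Finset.Icc 1 i, (mu k : ℚ) * d k
          + ∑ k ∈ Finset.Icc (i + 1) r, (mu k : ℚ) * d k := by
    intro i hi1 hi2
    rw [show Finset.Icc 1 r = Finset.Ioc 0 r from (Finset.Icc_add_one_left_eq_Ioc 0 r).symm ▸ rfl,
        show Finset.Icc 1 i = Finset.Ioc 0 i from (Finset.Icc_add_one_left_eq_Ioc 0 i).symm ▸ rfl,
        show Finset.Icc (i + 1) r = Finset.Ioc i r from (Finset.Icc_add_one_left_eq_Ioc i r).symm ▸ rfl]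
    exact (Finset.sum_Ioc_consecutive _ (by omega) hi2).symm
  have htermnn : ∀ k ∈ Finset.Icc 1 r, (0:ℚ) ≤ (mu k : ℚ) * d k := by
    intro k hk
    simp only [Finset.mem_Icc] at hk
    exact mul_nonneg (hmupos k hk.1 hk.2).le (hd k hk.1 hk.2)
  have hgr : g r = (1 - ∑ k ∈ Finset.Icc 1 r, (mu k : ℚ) * d k) / (mu (r + 1) : ℚ) := by
    have hempty : Finset.Icc (r + 1) r = (∅ : Finset ℕ) := Finset.Icc_eq_empty (by omega)
    rw [hg r hr le_rfl, hsplit1 r hr, hempty, Finset.sum_empty, hlamr]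
    push_cast; ring
  constructor
  · constructor
    · rintro ⟨-, hgrpos⟩
      rw [hgr] at hgrpos
      have h2 := mul_pos hgrpos hn
      rw [div_mul_cancel₀ _ (ne_of_gt hn)] at h2
      linarith
    · intro hS
      refine ⟨?_, by rw [hgr]; exact div_pos (by linarith) hn⟩
      intro i hi1 hi2
      rw [hg i hi1 hi2, hsplit1 i hi1, div_mul_eq_mul_div, div_mul_eq_mul_div,
        div_sub_div_same]
      apply div_nonneg _ hn.le
      have hC : ∑ k ∈ Finset.Icc (i + 1) r, (mu k : ℚ) * d k
          ≤ 1 - ∑ k ∈ Finset.Icc 1 i, (mu k : ℚ) * d k := by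
        have := hsplit2 i hi1 hi2
        linarith
      have hLnn := hlamnn i hi1 hi2
      have h1 : (mu i : ℚ) * ∑ k ∈ Finset.Icc (i + 1) r, (lam k : ℚ) * d k
          ≤ (lam i : ℚ) * ∑ k ∈ Finset.Icc (i + 1) r, (mu k : ℚ) * d k := by
        rw [Finset.mul_sum, Finset.mul_sum]
        apply Finset.sum_le_sum
        intro k hk
        simp only [Finset.mem_Icc] at hk
        have hV := Vnonneg r e lam mu he hmu0 hmu1 hmu hlamtop hlamr hlam
          i hi1 hi2 k (by omega) hk.2
        have hVq : (0:ℚ) ≤ (lam i : ℚ) * (mu k : ℚ) - (lam k : ℚ) * (mu i : ℚ) := by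
          exact_mod_cast hV
        have hdk := hd k (by omega) hk.2
        nlinarith
      have h2 : (lam i : ℚ) * ∑ k ∈ Finset.Icc (i + 1) r, (mu k : ℚ) * d k
          ≤ (lam i : ℚ) * (1 - ∑ k ∈ Finset.Icc 1 i, (mu k : ℚ) * d k) :=
        mul_le_mul_of_nonneg_left hC hLnn
      linarith
  · intro hS k hk1 hk2
    have hterm : (mu k : ℚ) * d k ≤ ∑ j ∈ Finset.Icc 1 r, (mu j : ℚ) * d j :=
      Finset.single_le_sum htermnn (Finset.mem_Icc.mpr ⟨hk1, hk2⟩)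
    have hmk := hmupos k hk1 hk2
    have hmk2 : (k : ℚ) ≤ (mu k : ℚ) := by exact_mod_cast (hmuk k hk2).1
    constructor
    · rw [lt_div_iff₀ hmk, mul_comm]
      linarith
    · exact one_div_le_one_div_of_le (by exact_mod_cast hk1) hmk2
end

section
/- With notation as in the definition of a (D,F)-chain (e_i ≥ 2, data λ, μ, n, nonnegative rationals d_k with Σ μ_k d_k < 1, and coefficients γ_i of M(D,Θ)), one has the explicit formula γ_r = (1/n)(1 − Σ_{i=1}^{r} μ_i d_i), and the bounds 0 < λ_i γ_r ≤ γ_i ≤ λ_i/n < 1 for all i. In particular ⌊M(D,Θ)⌋ = 0, i.e. every coefficient of M(D,Θ) is strictly between 0 and 1. -/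
/-- For a (D,F)-chain (Σ μ_k d_k < 1, d_k ≥ 0), the last coefficient of M(D,Θ) is
γ_r = (1/n)(1 − Σ μ_i d_i), and 0 < λ_i γ_r ≤ γ_i ≤ λ_i/n < 1 for all i;
in particular every coefficient of M(D,Θ) lies strictly between 0 and 1. -/
theorem stmt11 (r : ℕ) (hr : 1 ≤ r) (e lam mu : ℕ → ℤ)
    (he : ∀ i, 1 ≤ i → i ≤ r → 2 ≤ e i)
    (hmu0 : mu 0 = 0) (hmu1 : mu 1 = 1)
    (hmu : ∀ k, 1 ≤ k → k ≤ r → mu (k + 1) = e k * mu k - mu (k - 1))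
    (hlamtop : lam (r + 1) = 0) (hlamr : lam r = 1)
    (hlam : ∀ k, 1 ≤ k → k ≤ r → lam (k - 1) = e k * lam k - lam (k + 1))
    (d : ℕ → ℚ) (hd : ∀ k, 1 ≤ k → k ≤ r → 0 ≤ d k)
    (hchain : ∑ k ∈ Finset.Icc 1 r, (mu k : ℚ) * d k < 1)
    (g : ℕ → ℚ)
    (hg : ∀ i, 1 ≤ i → i ≤ r →
      g i = (lam i : ℚ) / (mu (r + 1) : ℚ)
              * ((mu 1 : ℚ) * (1 - d 1) - ∑ k ∈ Finset.Icc 2 i, (mu k : ℚ) * d k)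
          - (mu i : ℚ) / (mu (r + 1) : ℚ) * ∑ k ∈ Finset.Icc (i + 1) r, (lam k : ℚ) * d k) :
    g r = 1 / (mu (r + 1) : ℚ) * (1 - ∑ i ∈ Finset.Icc 1 r, (mu i : ℚ) * d i) ∧
    ∀ i, 1 ≤ i → i ≤ r →
      0 < (lam i : ℚ) * g r ∧ (lam i : ℚ) * g r ≤ g i ∧
      g i ≤ (lam i : ℚ) / (mu (r + 1) : ℚ) ∧ (lam i : ℚ) / (mu (r + 1) : ℚ) < 1 := by
  -- mu is increasing and nonnegative
  have A : ∀ k, k ≤ r → 0 ≤ mu k ∧ mu k < mu (k + 1) := by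
    intro k
    induction k with
    | zero => intro _; simp [hmu0, hmu1]
    | succ k ih =>
      intro hk
      obtain ⟨h0, h1⟩ := ih (by omega)
      have he' := he (k + 1) (by omega) hk
      have hrec : mu (k + 2) = e (k + 1) * mu (k + 1) - mu k := by
        have := hmu (k + 1) (by omega) hk; simpa using this
      have hp : 0 ≤ (e (k + 1) - 2) * mu (k + 1) :=
        mul_nonneg (by linarith) (by linarith)
      constructor
      · linarith
      · nlinarith [hp, hrec]
  have mu_ge : ∀ k, 1 ≤ k → k ≤ r + 1 → 1 ≤ mu k := by
    intro k
    induction k with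
    | zero => omega
    | succ k ih =>
      intro _ hk
      rcases Nat.eq_zero_or_pos k with h | h
      · subst h; simp [hmu1]
      · have h1 := ih h (by omega)
        have h2 := (A k (by omega)).2
        linarith
  -- lam is decreasing and nonnegative
  have B : ∀ j k, k + j = r + 1 → 1 ≤ k → 0 ≤ lam k ∧ lam k < lam (k - 1) := by
    intro j
    induction j with
    | zero =>
      intro k hk _
      have : k = r + 1 := by omega
      subst this
      simp [hlamtop, hlamr]
    | succ j ih =>
      intro k hk hk1
      obtain ⟨h0, h1⟩ := ih (k + 1) (by omega) (by omega)
      simp only [Nat.add_sub_cancel] at h1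
      have he' := he k hk1 (by omega)
      have hrec := hlam k hk1 (by omega)
      have hp : 0 ≤ (e k - 2) * lam k := mul_nonneg (by linarith) (by linarith)
      constructor
      · linarith
      · nlinarith [hp, hrec]
  have lam_pos : ∀ k, k ≤ r → 1 ≤ lam k := by
    intro k hk
    obtain ⟨h0, h1⟩ := B (r - k) (k + 1) (by omega) (by omega)
    simp only [Nat.add_sub_cancel] at h1
    linarith
  have lam_le : ∀ k, 1 ≤ k → k ≤ r + 1 → lam k ≤ lam 1 := by
    intro k
    induction k with
    | zero => omega
    | succ k ih =>
      intro _ hk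
      rcases Nat.eq_zero_or_pos k with h | h
      · subst h; simp
      · have h1 := ih h (by omega)
        obtain ⟨_, h2⟩ := B (r - k) (k + 1) (by omega) (by omega)
        simp only [Nat.add_sub_cancel] at h2
        linarith
  -- Wronskian identity
  have W : ∀ j k, k + j = r + 1 → 1 ≤ k →
      lam (k - 1) * mu k - lam k * mu (k - 1) = mu (r + 1) := by
    intro j
    induction j with
    | zero =>
      intro k hk _
      have : k = r + 1 := by omega
      subst this
      simp [hlamtop, hlamr]
    | succ j ih =>
      intro k hk hk1
      have IH := ih (k + 1) (by omega) (by omega)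
      simp only [Nat.add_sub_cancel] at IH
      have hlam' := hlam k hk1 (by omega)
      have hmu' := hmu k hk1 (by omega)
      linear_combination (mu k) * hlam' - (lam k) * hmu' + IH
  have lam0 : lam 0 = mu (r + 1) := by
    have := W r 1 (by omega) le_rfl
    simpa [hmu0, hmu1] using this
  have lam1lt : lam 1 < mu (r + 1) := by
    obtain ⟨_, h⟩ := B r 1 (by omega) le_rfl
    norm_num at h
    linarith [lam0]
  have hn1 : (1 : ℤ) ≤ mu (r + 1) := mu_ge (r + 1) (by omega) le_rfl
  have hnQ : (0 : ℚ) < (mu (r + 1) : ℚ) := by exact_mod_cast lt_of_lt_of_le one_pos hn1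
  -- cross determinant nonneg : for i ≤ k ≤ r, 0 ≤ lam i * mu k - lam k * mu i
  have Dge : ∀ i, 1 ≤ i → i ≤ r → ∀ k, i ≤ k → k ≤ r →
      0 ≤ lam i * mu k - lam k * mu i := by
    intro i hi1 hir
    have D : ∀ j, i + j ≤ r →
        0 ≤ lam i * mu (i + j) - lam (i + j) * mu i ∧
        lam i * mu (i + j) - lam (i + j) * mu i ≤
          lam i * mu (i + j + 1) - lam (i + j + 1) * mu i := by
      intro j
      induction j with
      | zero =>
        intro _
        have hW := W (r - i) (i + 1) (by omega) (by omega)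
        simp only [Nat.add_sub_cancel] at hW
        constructor
        · simp
        · simp only [Nat.add_zero]
          linarith [hW, hn1]
      | succ j ih =>
        intro hk
        obtain ⟨h0, h1⟩ := ih (by omega)
        have hW0 : 0 ≤ lam i * mu (i + j + 1) - lam (i + j + 1) * mu i := le_trans h0 h1
        have he' := he (i + j + 1) (by omega) hk
        have hmu' : mu (i + j + 2) = e (i + j + 1) * mu (i + j + 1) - mu (i + j) := by
          have := hmu (i + j + 1) (by omega) hk; simpa using this
        have hlam' : lam (i + j) = e (i + j + 1) * lam (i + j + 1) - lam (i + j + 2) := by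
          have := hlam (i + j + 1) (by omega) hk; simpa using this
        constructor
        · exact hW0
        · have key : lam i * mu (i + j + 2) - lam (i + j + 2) * mu i
              = e (i + j + 1) * (lam i * mu (i + j + 1) - lam (i + j + 1) * mu i)
                - (lam i * mu (i + j) - lam (i + j) * mu i) := by
            linear_combination (lam i) * hmu' - (mu i) * hlam'
          have hp : 0 ≤ (e (i + j + 1) - 2) *
              (lam i * mu (i + j + 1) - lam (i + j + 1) * mu i) :=
            mul_nonneg (by linarith) hW0
          show lam i * mu (i + j + 1) - lam (i + j + 1) * mu i ≤
              lam i * mu (i + j + 2) - lam (i + j + 2) * mu i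
          nlinarith [key, hp, h1]
    intro k hik hkr
    obtain ⟨j, rfl⟩ := Nat.exists_eq_add_of_le hik
    exact (D j hkr).1
  -- split lemmas for sums
  have hsplit : ∀ (f : ℕ → ℚ) (i : ℕ), i ≤ r →
      ∑ k ∈ Finset.Icc 1 r, f k = ∑ k ∈ Finset.Icc 1 i, f k + ∑ k ∈ Finset.Icc (i + 1) r, f k := by
    intro f i hir
    have hu : Finset.Icc 1 r = Finset.Icc 1 i ∪ Finset.Icc (i + 1) r := by
      ext x; simp; omega
    rw [hu, Finset.sum_union]
    rw [Finset.disjoint_left]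
    intro x hx hx'
    simp at hx hx'
    omega
  have hins : ∀ (f : ℕ → ℚ) (i : ℕ), 1 ≤ i →
      ∑ k ∈ Finset.Icc 1 i, f k = f 1 + ∑ k ∈ Finset.Icc 2 i, f k := by
    intro f i hi
    have : Finset.Icc 1 i = insert 1 (Finset.Icc 2 i) := by
      ext x; simp; omega
    rw [this, Finset.sum_insert (by simp)]
  -- the formula for g r
  have grfold : g r = 1 / (mu (r + 1) : ℚ) * (1 - ∑ i ∈ Finset.Icc 1 r, (mu i : ℚ) * d i) := by
    rw [hg r hr le_rfl, hins (fun k => (mu k : ℚ) * d k) r hr]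
    rw [show Finset.Icc (r + 1) r = ∅ from Finset.Icc_eq_empty (by omega)]
    simp only [Finset.sum_empty, mul_zero, sub_zero]
    rw [hlamr, hmu1]
    push_cast
    ring
  have Spos : 0 ≤ ∑ i ∈ Finset.Icc 1 r, (mu i : ℚ) * d i := by
    apply Finset.sum_nonneg
    intro k hk
    simp at hk
    have : (0:ℤ) ≤ mu k := (A k hk.2).1
    exact mul_nonneg (by exact_mod_cast this) (hd k hk.1 hk.2)
  have grpos : 0 < g r := by
    rw [grfold]
    have : 0 < 1 - ∑ i ∈ Finset.Icc 1 r, (mu i : ℚ) * d i := by linarith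
    positivity
  refine ⟨grfold, ?_⟩
  intro i hi1 hir
  have hlamiQ : (1 : ℚ) ≤ (lam i : ℚ) := by exact_mod_cast lam_pos i hir
  have hmuiQ : (0 : ℚ) ≤ (mu i : ℚ) := by
    have := (A i hir).1; exact_mod_cast this
  have hUpos : 0 ≤ ∑ k ∈ Finset.Icc (i + 1) r, (lam k : ℚ) * d k := by
    apply Finset.sum_nonneg
    intro k hk
    simp at hk
    have : (1:ℤ) ≤ lam k := lam_pos k hk.2
    exact mul_nonneg (by exact_mod_cast le_trans zero_le_one this) (hd k (by omega) hk.2)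
  have hTpos : 0 ≤ ∑ k ∈ Finset.Icc 2 i, (mu k : ℚ) * d k := by
    apply Finset.sum_nonneg
    intro k hk
    simp at hk
    have : (0:ℤ) ≤ mu k := (A k (by omega)).1
    exact mul_nonneg (by exact_mod_cast this) (hd k (by omega) (by omega))
  have hd1 : 0 ≤ d 1 := hd 1 le_rfl hr
  have hlamilt : (lam i : ℚ) < (mu (r + 1) : ℚ) := by
    have h1 := lam_le i hi1 (by omega)
    exact_mod_cast lt_of_le_of_lt h1 lam1lt
  refine ⟨mul_pos (by linarith) grpos, ?_, ?_, ?_⟩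
  · -- lam i * g r ≤ g i
    have key : g i = (lam i : ℚ) * g r + (1 / (mu (r + 1) : ℚ)) *
        ∑ k ∈ Finset.Icc (i + 1) r,
          (((lam i : ℚ) * (mu k : ℚ) - (mu i : ℚ) * (lam k : ℚ)) * d k) := by
      rw [hg i hi1 hir, grfold, hsplit (fun k => (mu k : ℚ) * d k) i hir,
        hins (fun k => (mu k : ℚ) * d k) i hi1]
      have expand : ∑ k ∈ Finset.Icc (i + 1) r,
          (((lam i : ℚ) * (mu k : ℚ) - (mu i : ℚ) * (lam k : ℚ)) * d k)
          = (lam i : ℚ) * ∑ k ∈ Finset.Icc (i + 1) r, (mu k : ℚ) * d k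
            - (mu i : ℚ) * ∑ k ∈ Finset.Icc (i + 1) r, (lam k : ℚ) * d k := by
        rw [Finset.mul_sum, Finset.mul_sum, ← Finset.sum_sub_distrib]
        apply Finset.sum_congr rfl
        intros; ring
      rw [expand, hmu1]
      push_cast
      ring
    have sumpos : 0 ≤ ∑ k ∈ Finset.Icc (i + 1) r,
        (((lam i : ℚ) * (mu k : ℚ) - (mu i : ℚ) * (lam k : ℚ)) * d k) := by
      apply Finset.sum_nonneg
      intro k hk
      simp at hk
      have h1 : (0:ℤ) ≤ lam i * mu k - lam k * mu i := Dge i hi1 hir k (by omega) hk.2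
      have h1' : (0:ℚ) ≤ (lam i : ℚ) * (mu k : ℚ) - (mu i : ℚ) * (lam k : ℚ) := by
        have h2 : ((0:ℤ):ℚ) ≤ ((lam i * mu k - lam k * mu i : ℤ) : ℚ) := Int.cast_le.mpr h1
        push_cast at h2
        linarith
      exact mul_nonneg h1' (hd k (by omega) hk.2)
    rw [key]
    have : 0 ≤ (1 / (mu (r + 1) : ℚ)) * ∑ k ∈ Finset.Icc (i + 1) r,
        (((lam i : ℚ) * (mu k : ℚ) - (mu i : ℚ) * (lam k : ℚ)) * d k) :=
      mul_nonneg (by positivity) sumpos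
    linarith
  · -- g i ≤ lam i / n
    rw [hg i hi1 hir, hmu1]
    push_cast
    have h1 : 0 ≤ (lam i : ℚ) / (mu (r + 1) : ℚ) *
        (d 1 + ∑ k ∈ Finset.Icc 2 i, (mu k : ℚ) * d k) :=
      mul_nonneg (by positivity) (by linarith)
    have h2 : 0 ≤ (mu i : ℚ) / (mu (r + 1) : ℚ) *
        ∑ k ∈ Finset.Icc (i + 1) r, (lam k : ℚ) * d k :=
      mul_nonneg (by positivity) hUpos
    nlinarith [h1, h2]
  · rw [div_lt_one hnQ]
    exact hlamilt
end
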